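/- arXiv:1410.7497 — 5 statements merged into one kernel-verified Lean document; each statement's English description precedes it below -/
import Mathlib

section
/- Let m ≥ 1, let γ be a primitive m-th root of unity in an algebraically closed field k of characteristic 0, and for i ∈ ℤ set φ_i(x) = 1 - γ^{-i-1} x^d in k[x]. Then ∑_{j=0}^{m-1} φ_j φ_{j+1} ⋯ φ_{j+m-2} (indices mod m) equals m (as a polynomial in x). -/
open Polynomial Finset

private lemma key_sum {k : Type*} [Field k]
    (m : ℕ) (hm : 1 ≤ m) (γ : k) (hγ : IsPrimitiveRoot γ m) :
    ∑ j ∈ Finset.range m, ∏ r ∈ Finset.range (m - 1),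
      ((1 : Polynomial k) - Polynomial.C (γ ^ (-((j : ℤ) + (r : ℤ)) - 1)) * Polynomial.X)
      = Polynomial.C (m : k) := by
  classical
  set S : Polynomial k := ∑ j ∈ Finset.range m, ∏ r ∈ Finset.range (m - 1),
      ((1 : Polynomial k) - Polynomial.C (γ ^ (-((j : ℤ) + (r : ℤ)) - 1)) * Polynomial.X) with hS
  have hγm : γ ^ (m : ℤ) = 1 := by
    rw [zpow_natCast]; exact hγ.pow_eq_one
  have hzpow : ∀ e : ℤ, (m : ℤ) ∣ e → γ ^ e = 1 := by
    rintro e ⟨q, rfl⟩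
    rw [zpow_mul, hγm, one_zpow]
  -- evaluation of S at γ ^ t equals m
  have heval : ∀ t ∈ Finset.range m, S.eval (γ ^ t) = (m : k) := by
    intro t ht
    rw [Finset.mem_range] at ht
    rw [hS, eval_finset_sum]
    have hterm : ∀ j ∈ Finset.range m,
        (∏ r ∈ Finset.range (m - 1),
          ((1 : Polynomial k) - Polynomial.C (γ ^ (-((j : ℤ) + (r : ℤ)) - 1)) * Polynomial.X)).eval (γ ^ t)
        = if j = t then (m : k) else 0 := by
      intro j hj
      rw [Finset.mem_range] at hj
      simp only [eval_prod, eval_sub, eval_one, eval_mul, eval_C, eval_X]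
      by_cases hjt : j = t
      · subst hjt
        rw [if_pos rfl]
        have hfac : ∀ r : ℕ, (1 : k) - γ ^ (-((j : ℤ) + (r : ℤ)) - 1) * γ ^ j
            = 1 - (γ⁻¹) ^ (r + 1) := by
          intro r
          have hγ0 : γ ≠ 0 := hγ.ne_zero (by omega)
          have : γ ^ (-((j : ℤ) + (r : ℤ)) - 1) * γ ^ j
              = γ ^ ((-((j : ℤ) + (r : ℤ)) - 1) + j) := by
            rw [← zpow_natCast γ j, ← zpow_add₀ hγ0]
          rw [this]
          have he : (-((j : ℤ) + (r : ℤ)) - 1) + j = -((r : ℤ) + 1) := by ring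
          rw [he, show (-((r:ℤ)+1)) = -(((r+1 : ℕ) : ℤ)) by push_cast; ring,
            zpow_neg, zpow_natCast, ← inv_pow]
        simp_rw [hfac]
        obtain ⟨n, rfl⟩ : ∃ n, m = n + 1 := ⟨m - 1, by omega⟩
        have := (hγ.inv).prod_one_sub_pow_eq_order
        simpa using this
      · rw [if_neg hjt]
        set r₀ : ℕ := ((t - j - 1 : ℤ) % m).toNat with hr₀def
        have hmpos : (0 : ℤ) < m := by exact_mod_cast hm
        have hr₀eq : ((r₀ : ℤ)) = (t - j - 1 : ℤ) % m := by
          rw [hr₀def, Int.toNat_of_nonneg (Int.emod_nonneg _ (by omega))]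
        have hdvd : (m : ℤ) ∣ (t - j - 1) - r₀ := by
          rw [hr₀eq]; exact Int.dvd_self_sub_of_emod_eq rfl
        have hr₀lt : (r₀ : ℤ) < m := by
          rw [hr₀eq]; exact Int.emod_lt_of_pos _ hmpos
        have hr₀ne : (r₀ : ℤ) ≠ (m : ℤ) - 1 := by
          intro h
          have hdvd2 : (m : ℤ) ∣ ((t : ℤ) - j) := by
            have h3 : ((t : ℤ) - j) = ((t : ℤ) - j - 1 - r₀) + m := by rw [h]; ring
            rw [h3]; exact dvd_add hdvd dvd_rfl
          have := Int.eq_zero_of_dvd_of_natAbs_lt_natAbs hdvd2 (by omega)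
          omega
        have hr₀mem : r₀ ∈ Finset.range (m - 1) := by
          rw [Finset.mem_range]; omega
        apply Finset.prod_eq_zero hr₀mem
        have hγ0 : γ ≠ 0 := hγ.ne_zero (by omega)
        have : γ ^ (-((j : ℤ) + (r₀ : ℤ)) - 1) * γ ^ t
            = γ ^ ((-((j : ℤ) + (r₀ : ℤ)) - 1) + t) := by
          rw [← zpow_natCast γ t, ← zpow_add₀ hγ0]
        rw [this, hzpow _ (by convert hdvd using 1; ring), sub_self]
    rw [Finset.sum_congr rfl hterm, Finset.sum_ite_eq' (Finset.range m) t,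
      if_pos (Finset.mem_range.mpr ht)]
  -- degree bound
  have hdeg : S.natDegree < m := by
    have : S.natDegree ≤ m - 1 := by
      apply natDegree_sum_le_of_forall_le
      intro j _
      refine (natDegree_prod_le _ _).trans ?_
      have : ∀ r ∈ Finset.range (m - 1),
          ((1 : Polynomial k) - Polynomial.C (γ ^ (-((j : ℤ) + (r : ℤ)) - 1)) * Polynomial.X).natDegree ≤ 1 := by
        intro r _
        refine (natDegree_sub_le _ _).trans (max_le (by simp) ?_)
        exact (natDegree_C_mul_le _ _).trans (by simp)
      exact le_trans (Finset.sum_le_sum this) (by simp)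
    omega
  -- conclude
  have hQ : S - Polynomial.C (m : k) = 0 := by
    apply Polynomial.eq_zero_of_natDegree_lt_card_of_eval_eq_zero'
      (S - Polynomial.C (m : k)) ((Finset.range m).image (γ ^ ·))
    · intro i hi
      rw [Finset.mem_image] at hi
      obtain ⟨t, ht, rfl⟩ := hi
      simp [heval t ht]
    · rw [Finset.card_image_of_injOn hγ.injOn_pow, Finset.card_range]
      refine lt_of_le_of_lt (natDegree_sub_le _ _) ?_
      simpa using hdeg
  have := sub_eq_zero.mp hQ
  exact this

/-- ∑_{j=0}^{m-1} φ_j φ_{j+1} ⋯ φ_{j+m-2} = m, where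
φ_t = 1 - γ^{-t-1} x^d and γ is a primitive m-th root of unity. -/
theorem stmt_0 {k : Type*} [Field k] [IsAlgClosed k] [CharZero k]
    (m d : ℕ) (hm : 1 ≤ m) (hd : 1 ≤ d) (γ : k) (hγ : IsPrimitiveRoot γ m) :
    ∑ j ∈ Finset.range m, ∏ r ∈ Finset.range (m - 1),
      ((1 : Polynomial k) - Polynomial.C (γ ^ (-((j : ℤ) + (r : ℤ)) - 1)) * Polynomial.X ^ d)
      = (m : Polynomial k) := by
  have h := key_sum m hm γ hγ
  have h2 := congrArg (Polynomial.aeval (Polynomial.X ^ d : Polynomial k)) h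
  simp only [map_sum, map_prod, map_sub, map_one, map_mul, Polynomial.aeval_C,
    Polynomial.aeval_X, Polynomial.algebraMap_eq] at h2
  exact h2.trans (by simp)
end

section
/- Let m ≥ 1, γ a primitive m-th root of unity in k, and φ_i(x) = 1 - γ^{-i-1} x^d. Then ∑_{j=0}^{m-1} γ^{-j} · (φ_0 ⋯ φ̂_{j-1} ⋯ φ_{m-1}) = m · x^{(m-1)d}, where the hat denotes omission of the factor φ_{j-1} (indices mod m), i.e. ∑_{j=0}^{m-1} γ^{-j} φ_j φ_{j+1} ⋯ φ_{j+m-2} = m x^{(m-1)d}. -/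
/-!
Put `δ = γ⁻¹` and `qᵢ = 1 - δ^i Y`. Since the `δ^i`, `i < m`, are all the `m`-th roots of unity,
`∏_{i<m} qᵢ = 1 - Y^m`; the same holds for the shifted family `δ^(j+r)`, so the product in the
`j`-th summand is the cofactor `∏_{i ≠ j} qᵢ`. The sum is therefore `-(d/dY) ∏ qᵢ = m Y^(m-1)`,
and substituting `Y = X^d` gives the claim.
-/

open Polynomial Finset

theorem Polynomial.one_sub_C_mul_X_ne_zero {R : Type*} [Ring R] [Nontrivial R] (c : R) :
    (1 - C c * X : R[X]) ≠ 0 := by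
  intro h
  simpa using congrArg (coeff · 0) h

namespace IsPrimitiveRoot

variable {R : Type*} [CommRing R] [IsDomain R] {ζ : R} {m : ℕ}

theorem prod_one_sub_pow_mul (hζ : IsPrimitiveRoot ζ m) (hm : 0 < m) (b : R) :
    ∏ i ∈ range m, (1 - ζ ^ i * b) = 1 - b ^ m := by
  classical
  have h := hζ.pow_sub_pow_eq_prod_sub_mul 1 b hm
  rw [one_pow, nthRootsFinset_def, ← Multiset.toFinset_eq hζ.nthRoots_one_nodup, Finset.prod_mk,
    hζ.nthRoots_eq (one_pow m)] at h
  simpa [Finset.prod_eq_multiset_prod] using h.symm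

theorem prod_erase_one_sub_C_pow_mul_X (hζ : IsPrimitiveRoot ζ m) {j : ℕ} (hj : j < m) :
    ∏ i ∈ (range m).erase j, (1 - C (ζ ^ i) * X) =
      ∏ r ∈ range (m - 1), (1 - C (ζ ^ (j + r + 1)) * X) := by
  have hCζ : IsPrimitiveRoot (C ζ) m := hζ.map_of_injective C_injective
  refine mul_left_cancel₀ (one_sub_C_mul_X_ne_zero (ζ ^ j)) ?_
  calc (1 - C (ζ ^ j) * X) * ∏ i ∈ (range m).erase j, (1 - C (ζ ^ i) * X)
      = ∏ i ∈ range m, (1 - C ζ ^ i * X : R[X]) := by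
        simp only [← map_pow]
        exact mul_prod_erase (range m) (fun i ↦ 1 - C (ζ ^ i) * X) (mem_range.2 hj)
    _ = 1 - X ^ m := hCζ.prod_one_sub_pow_mul (by omega) X
    _ = 1 - (C (ζ ^ j) * X) ^ m := by
        rw [mul_pow, ← map_pow, ← pow_mul, pow_mul', hζ.pow_eq_one, one_pow, map_one, one_mul]
    _ = ∏ r ∈ range m, (1 - C ζ ^ r * (C (ζ ^ j) * X) : R[X]) :=
        (hCζ.prod_one_sub_pow_mul (by omega) (C (ζ ^ j) * X)).symm
    _ = (1 - C (ζ ^ j) * X) * ∏ r ∈ range (m - 1), (1 - C (ζ ^ (j + r + 1)) * X) := by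
        obtain ⟨n, rfl⟩ := Nat.exists_eq_add_of_lt hj
        rw [show j + n + 1 - 1 = j + n by omega, prod_range_succ', mul_comm]
        simp only [← map_pow, ← mul_assoc, ← map_mul, ← pow_add]
        ring_nf

theorem sum_C_pow_mul_prod_one_sub_C_pow_mul_X (hζ : IsPrimitiveRoot ζ m) (hm : 0 < m) :
    ∑ j ∈ range m, C (ζ ^ j) * ∏ r ∈ range (m - 1), (1 - C (ζ ^ (j + r + 1)) * X) =
      (m : R[X]) * X ^ (m - 1) := by
  have hderiv := congrArg derivative
    ((hζ.map_of_injective C_injective).prod_one_sub_pow_mul hm (X : R[X]))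
  simp only [← map_pow, derivative_prod_finset, derivative_sub, derivative_one,
    derivative_C_mul_X, derivative_X_pow, map_natCast, zero_sub, mul_neg, sum_neg_distrib,
    neg_inj] at hderiv
  rw [← hderiv]
  refine sum_congr rfl fun j hj ↦ ?_
  rw [hζ.prod_erase_one_sub_C_pow_mul_X (mem_range.1 hj), mul_comm]

end IsPrimitiveRoot

theorem stmt_1_general {k : Type*} [Field k]
    (m d : ℕ) (hm : 1 ≤ m) (γ : k) (hγ : IsPrimitiveRoot γ m) :
    ∑ j ∈ Finset.range m, Polynomial.C (γ ^ (-(j : ℤ))) *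
      ∏ r ∈ Finset.range (m - 1),
        ((1 : Polynomial k) - Polynomial.C (γ ^ (-((j : ℤ) + (r : ℤ)) - 1)) * Polynomial.X ^ d)
      = (m : Polynomial k) * Polynomial.X ^ ((m - 1) * d) := by
  have hpow (n : ℕ) : γ ^ (-(n : ℤ)) = γ⁻¹ ^ n := by rw [zpow_neg, zpow_natCast, inv_pow]
  have h := congrArg (expand k d) (hγ.inv.sum_C_pow_mul_prod_one_sub_C_pow_mul_X hm)
  simp only [map_sum, map_prod, map_mul, map_sub, map_one, map_natCast, map_pow, expand_C,
    expand_X] at h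
  rw [mul_comm (m - 1), pow_mul, ← h]
  refine sum_congr rfl fun j _ ↦ ?_
  rw [hpow, map_pow]
  congr 1
  refine prod_congr rfl fun r _ ↦ ?_
  rw [show -((j : ℤ) + r) - 1 = -((j + r + 1 : ℕ) : ℤ) by push_cast; ring, hpow, map_pow]

/-- ∑_{j=0}^{m-1} γ^{-j} φ_j φ_{j+1} ⋯ φ_{j+m-2} = m x^{(m-1)d}. -/
theorem stmt_1 {k : Type*} [Field k] [IsAlgClosed k] [CharZero k]
    (m d : ℕ) (hm : 1 ≤ m) (hd : 1 ≤ d) (γ : k) (hγ : IsPrimitiveRoot γ m) :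
    ∑ j ∈ Finset.range m, Polynomial.C (γ ^ (-(j : ℤ))) *
      ∏ r ∈ Finset.range (m - 1),
        ((1 : Polynomial k) - Polynomial.C (γ ^ (-((j : ℤ) + (r : ℤ)) - 1)) * Polynomial.X ^ d)
      = (m : Polynomial k) * Polynomial.X ^ ((m - 1) * d) :=
  stmt_1_general m d hm γ hγ
end

section
/- Let m ≥ 2, γ a primitive m-th root of unity in k, and φ_i(x) = 1 - γ^{-i-1} x^d. Then ∑_{j=0}^{m-1} γ^{-j} · (φ_0 ⋯ φ̂_{j-2} φ̂_{j-1} ⋯ φ_{m-1}) = 0, where both factors φ_{j-2} and φ_{j-1} are omitted (indices mod m), i.e. ∑_{j=0}^{m-1} γ^{-j} φ_j φ_{j+1} ⋯ φ_{j+m-3} = 0. -/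
/-!
Each summand is `γ^{-j} P(γ^{-j} x^d)` for the single polynomial
`P(y) = ∏_{r < m-2} (1 - γ^{-r-1} y)` of degree `m - 2`. Expanding `P`, the coefficient of
`y^i` in the sum is `p_i ∑_j (γ^{-(i+1)})^j`, a full geometric sum over a nontrivial `m`-th root
of unity since `1 ≤ i + 1 ≤ m - 1`, hence zero.
-/

open Polynomial Finset

theorem IsPrimitiveRoot.geom_sum_pow_eq_zero {R : Type*} [CommRing R] [IsDomain R] {ζ : R}
    {m i : ℕ} (hζ : IsPrimitiveRoot ζ m) (hi : i ≠ 0) (him : i < m) :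
    ∑ j ∈ range m, (ζ ^ i) ^ j = 0 := by
  refine eq_zero_of_ne_zero_of_mul_left_eq_zero
    (sub_ne_zero_of_ne (hζ.pow_ne_one_of_pos_of_lt hi him).symm) ?_
  rw [mul_neg_geom_sum, ← pow_mul, mul_comm, pow_mul, hζ.pow_eq_one, one_pow, sub_self]

theorem IsPrimitiveRoot.sum_C_pow_mul_comp_C_pow_mul_eq_zero {R : Type*} [CommRing R]
    [IsDomain R] {ζ : R} {m : ℕ} (hζ : IsPrimitiveRoot ζ m) {p : R[X]}
    (hp : p.natDegree + 1 < m) (q : R[X]) :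
    ∑ j ∈ range m, C (ζ ^ j) * p.comp (C (ζ ^ j) * q) = 0 := by
  have h_X : ∑ j ∈ range m, C (ζ ^ j) * p.comp (C (ζ ^ j) * X) = 0 := by
    ext n
    simp only [finsetSum_coeff, coeff_C_mul, comp_C_mul_X_coeff, coeff_zero]
    rcases le_or_gt n p.natDegree with hn | hn
    · calc ∑ j ∈ range m, ζ ^ j * (p.coeff n * (ζ ^ j) ^ n)
            = p.coeff n * ∑ j ∈ range m, (ζ ^ (n + 1)) ^ j := by
              rw [mul_sum]; refine sum_congr rfl fun j _ => ?_; ring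
          _ = 0 := by rw [hζ.geom_sum_pow_eq_zero n.succ_ne_zero (by omega), mul_zero]
    · simp [coeff_eq_zero_of_natDegree_lt hn]
  simpa only [Polynomial.sum_comp, mul_comp, C_comp, X_comp, comp_assoc, zero_comp] using
    congrArg (·.comp q) h_X

theorem natDegree_prod_one_sub_C_mul_X_le {R ι : Type*} [CommRing R] (s : Finset ι)
    (a : ι → R) : (∏ i ∈ s, (1 - C (a i) * X)).natDegree ≤ s.card := by
  refine (natDegree_prod_le _ _).trans ?_
  have h_factor (i : ι) : (1 - C (a i) * X).natDegree ≤ 1 := by compute_degree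
  simpa using sum_le_card_nsmul s _ 1 fun i _ => h_factor i

theorem stmt_2_general {k : Type*} [Field k]
    (m d : ℕ) (hm : 2 ≤ m) (γ : k) (hγ : IsPrimitiveRoot γ m) :
    ∑ j ∈ Finset.range m, Polynomial.C (γ ^ (-(j : ℤ))) *
      ∏ r ∈ Finset.range (m - 2),
        ((1 : Polynomial k) - Polynomial.C (γ ^ (-((j : ℤ) + (r : ℤ)) - 1)) * Polynomial.X ^ d)
      = 0 := by
  set P : k[X] := ∏ r ∈ range (m - 2), (1 - C (γ⁻¹ ^ (r + 1)) * X)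
  have hP : P.natDegree + 1 < m :=
    Nat.add_lt_of_lt_sub ((natDegree_prod_one_sub_C_mul_X_le _ _).trans_lt (by simp; omega))
  have h_factor (j : ℕ) : ∏ r ∈ range (m - 2), (1 - C (γ ^ (-((j : ℤ) + r) - 1)) * X ^ d)
      = P.comp (C (γ⁻¹ ^ j) * X ^ d) := by
    simp only [P, Polynomial.prod_comp, sub_comp, one_comp, mul_comp, C_comp, X_comp, ← mul_assoc,
      ← C_mul, ← pow_add]
    refine prod_congr rfl fun r _ => ?_
    rw [← zpow_natCast, inv_zpow']
    push_cast
    ring_nf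
  simp only [h_factor, ← inv_zpow', zpow_natCast]
  exact hγ.inv.sum_C_pow_mul_comp_C_pow_mul_eq_zero hP _

/-- ∑_{j=0}^{m-1} γ^{-j} φ_j φ_{j+1} ⋯ φ_{j+m-3} = 0. -/
theorem stmt_2 {k : Type*} [Field k] [IsAlgClosed k] [CharZero k]
    (m d : ℕ) (hm : 2 ≤ m) (hd : 1 ≤ d) (γ : k) (hγ : IsPrimitiveRoot γ m) :
    ∑ j ∈ Finset.range m, Polynomial.C (γ ^ (-(j : ℤ))) *
      ∏ r ∈ Finset.range (m - 2),
        ((1 : Polynomial k) - Polynomial.C (γ ^ (-((j : ℤ) + (r : ℤ)) - 1)) * Polynomial.X ^ d)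
      = 0 :=
  stmt_2_general m d hm γ hγ
end

section
/- Let q be a primitive m-th root of unity in a field k of characteristic 0, and let integers i, j, t, l satisfy 0 ≤ t ≤ i+j ≤ m-1 and 0 ≤ l ≤ m-1-i-j. Then q^{(l+t)(l+t+1)/2 + t(i+j-t)} · (-1)^{l+t} · C(m-1-t, l)_q · C(m-1+t-i-j, l+t)_q = C(i+j, t)_q · C(m-1-i-j, l)_q, where C(a,b)_q denotes the Gaussian binomial coefficient at q. -/
/-- The Gaussian (q-)binomial coefficient, defined via the q-Pascal recurrence
`C(n+1, l+1)_q = C(n, l)_q + q^{l+1} C(n, l+1)_q`; it agrees with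
`(n)!_q / ((l)!_q (n-l)!_q)` whenever the latter is defined. -/
def qBinom {k : Type*} [Field k] (q : k) : ℕ → ℕ → k
  | _, 0 => 1
  | 0, _ + 1 => 0
  | n + 1, l + 1 => qBinom q n l + q ^ (l + 1) * qBinom q n (l + 1)

section Aux

variable {k : Type*} [Field k]

/-- q-integer: `(n)_q = 1 + q + ... + q^{n-1}`. -/
def qInt (q : k) (n : ℕ) : k := ∑ i ∈ Finset.range n, q ^ i

/-- q-factorial. -/
def qFac (q : k) (n : ℕ) : k := ∏ s ∈ Finset.range n, qInt q (s + 1)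

lemma qFac_succ (q : k) (n : ℕ) : qFac q (n + 1) = qFac q n * qInt q (n + 1) :=
  Finset.prod_range_succ _ _

lemma qFac_zero (q : k) : qFac q 0 = 1 := rfl

lemma qInt_add (q : k) (a b : ℕ) : qInt q (a + b) = qInt q a + q ^ a * qInt q b := by
  unfold qInt
  rw [Finset.sum_range_add, Finset.mul_sum]
  simp [pow_add]

lemma qBinom_zero (q : k) (n : ℕ) : qBinom q n 0 = 1 := by cases n <;> rfl

lemma qBinom_eq_zero (q : k) : ∀ n l : ℕ, n < l → qBinom q n l = 0 := by
  intro n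
  induction n with
  | zero =>
    intro l hl
    match l, hl with
    | l + 1, _ => rfl
  | succ n ih =>
    intro l hl
    match l, hl with
    | l + 1, hl =>
      show qBinom q n l + q ^ (l + 1) * qBinom q n (l + 1) = 0
      rw [ih l (by omega), ih (l + 1) (by omega)]
      ring

lemma qBinom_self (q : k) : ∀ n : ℕ, qBinom q n n = 1 := by
  intro n
  induction n with
  | zero => rfl
  | succ n ih =>
    show qBinom q n n + q ^ (n + 1) * qBinom q n (n + 1) = 1
    rw [ih, qBinom_eq_zero q n (n + 1) (by omega)]
    ring

lemma qBinom_mul_qFac (q : k) : ∀ n a b : ℕ, n = a + b →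
    qBinom q n a * qFac q a * qFac q b = qFac q n := by
  intro n
  induction n using Nat.strong_induction_on with
  | _ n ih =>
    intro a b h
    match a, b with
    | 0, b =>
      subst h
      simp [qBinom_zero, qFac_zero]
    | a + 1, 0 =>
      subst h
      rw [qBinom_self]
      simp [qFac_zero]
    | a + 1, b + 1 =>
      subst h
      rw [show (a + 1) + (b + 1) = (a + 1 + b) + 1 from rfl]
      have ih1 := ih (a + 1 + b) (by omega) a (b + 1) (by omega)
      have ih2 := ih (a + 1 + b) (by omega) (a + 1) b rfl
      have hqint : qInt q (a + 1) + q ^ (a + 1) * qInt q (b + 1) = qInt q (a + 1 + b + 1) :=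
        (qInt_add q (a + 1) (b + 1)).symm
      show (qBinom q (a + 1 + b) a + q ^ (a + 1) * qBinom q (a + 1 + b) (a + 1)) *
          qFac q (a + 1) * qFac q (b + 1) = qFac q (a + 1 + b + 1)
      rw [qFac_succ q (a + 1 + b), qFac_succ q a, qFac_succ q b] 
      rw [qFac_succ q a] at ih2
      rw [qFac_succ q b] at ih1
      linear_combination qInt q (a + 1) * ih1 + q ^ (a + 1) * qInt q (b + 1) * ih2 +
        qFac q (a + 1 + b) * hqint

lemma qInt_flip {m : ℕ} {q : k} (hq : IsPrimitiveRoot q m) {c d : ℕ}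
    (hc : 0 < c) (hd : 0 < d) (h : c + d = m) : q ^ c * qInt q d = - qInt q c := by
  have h0 : qInt q m = 0 := hq.geom_sum_eq_zero (by omega)
  have h1 := qInt_add q c d
  rw [h, h0] at h1
  linear_combination -h1

lemma Lpp {m : ℕ} {q : k} (hq : IsPrimitiveRoot q m) :
    ∀ B A C X Y : ℕ, m = A + B + C + 1 → X = B + C → Y = A + B →
    q ^ (A * B + B * (B + 1) / 2) * qFac q X * qFac q A =
      (-1) ^ B * qFac q Y * qFac q C := by
  intro B
  induction B with
  | zero =>
    intro A C X Y hm hX hY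
    subst hX; subst hY
    simp [mul_comm]
  | succ B ihB =>
    intro A C X Y hm hX hY
    subst hX; subst hY
    have IH := ihB A (C + 1) (B + (C + 1)) (A + B) (by omega) rfl rfl
    rw [show B + (C + 1) = (B + C) + 1 from rfl, qFac_succ, qFac_succ] at IH
    have flip : q ^ (A + B + 1) * qInt q (C + 1) = - qInt q (A + B + 1) :=
      qInt_flip hq (by omega) (by omega) (by omega)
    have htri : (B + 1) * ((B + 1) + 1) / 2 = B * (B + 1) / 2 + (B + 1) := by
      have h2 : (B + 1) * ((B + 1) + 1) = B * (B + 1) + (B + 1) * 2 := by ring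
      rw [h2, Nat.add_mul_div_right _ _ (by norm_num : (0:ℕ) < 2)]
    have hexp : A * (B + 1) + (B + 1) * ((B + 1) + 1) / 2 =
        (A * B + B * (B + 1) / 2) + (A + B + 1) := by
      rw [htri]; ring
    rw [show (B + 1) + C = (B + C) + 1 by omega, show A + (B + 1) = (A + B) + 1 from rfl,
      qFac_succ, qFac_succ, hexp, pow_add]
    have hneg : ((-1 : k)) ^ (B + 1) = -(-1 : k) ^ B := by rw [pow_succ]; ring
    rw [hneg]
    linear_combination q ^ (A + B + 1) * IH + (-1 : k) ^ B * qFac q (A + B) * qFac q C * flip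

lemma qInt_ne_zero {m : ℕ} {q : k} (hq : IsPrimitiveRoot q m) {s : ℕ}
    (h1 : 0 < s) (h2 : s < m) : qInt q s ≠ 0 := by
  have hm2 : 2 ≤ m := by omega
  have hq1 : q ≠ 1 := by
    intro h
    subst h
    have := Nat.le_of_dvd one_pos (hq.dvd_of_pow_eq_one 1 (one_pow _))
    omega
  have hpow : q ^ s ≠ 1 := by
    intro h
    have := hq.dvd_of_pow_eq_one s h
    have := Nat.le_of_dvd h1 this
    omega
  have hgeom : qInt q s * (q - 1) = q ^ s - 1 := geom_sum_mul q s
  intro h0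
  rw [h0, zero_mul] at hgeom
  exact hpow (by linear_combination -hgeom)

lemma qFac_ne_zero {m : ℕ} {q : k} (hq : IsPrimitiveRoot q m) {n : ℕ}
    (h : n < m) : qFac q n ≠ 0 := by
  unfold qFac
  rw [Finset.prod_ne_zero_iff]
  intro s hs
  have hs' : s < n := Finset.mem_range.mp hs
  exact qInt_ne_zero hq (by omega) (by omega)

end Aux

/-- for q a primitive m-th root of unity and 0 ≤ t ≤ i+j ≤ m-1,
0 ≤ l ≤ m-1-i-j,
q^{(l+t)(l+t+1)/2 + t(i+j-t)} (-1)^{l+t} C(m-1-t,l)_q C(m-1+t-i-j,l+t)_q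
  = C(i+j,t)_q C(m-1-i-j,l)_q. -/
theorem stmt_7 {k : Type*} [Field k] [CharZero k]
    (m : ℕ) (hm : 1 ≤ m) (q : k) (hq : IsPrimitiveRoot q m)
    (i j t l : ℕ) (ht : t ≤ i + j) (hij : i + j ≤ m - 1) (hl : l ≤ m - 1 - i - j) :
    q ^ ((l + t) * (l + t + 1) / 2 + t * (i + j - t)) * (-1 : k) ^ (l + t) *
        qBinom q (m - 1 - t) l * qBinom q (m - 1 + t - i - j) (l + t) =
      qBinom q (i + j) t * qBinom q (m - 1 - i - j) l := by
  obtain ⟨b, hb⟩ : ∃ b, i + j = t + b := ⟨i + j - t, by omega⟩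
  obtain ⟨c, hc⟩ : ∃ c, m = t + b + l + c + 1 := ⟨m - 1 - i - j - l, by omega⟩
  have h1 : m - 1 - t = b + l + c := by omega
  have h2 : m - 1 + t - i - j = t + l + c := by omega
  have h3 : m - 1 - i - j = l + c := by omega
  have h4 : i + j - t = b := by omega
  rw [h1, h2, h3, h4, hb]
  -- nonvanishing facts
  have hq0 : q ≠ 0 := by
    intro h
    have := hq.pow_eq_one
    rw [h, zero_pow (by omega : m ≠ 0)] at this
    exact zero_ne_one this
  have hFl : qFac q l ≠ 0 := qFac_ne_zero hq (by omega)
  have hFbc : qFac q (b + c) ≠ 0 := qFac_ne_zero hq (by omega)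
  have hFlt : qFac q (l + t) ≠ 0 := qFac_ne_zero hq (by omega)
  have hFc : qFac q c ≠ 0 := qFac_ne_zero hq (by omega)
  have hFt : qFac q t ≠ 0 := qFac_ne_zero hq (by omega)
  have hFb : qFac q b ≠ 0 := qFac_ne_zero hq (by omega)
  -- binomial/factorial conversions
  have k1 : qBinom q (b + l + c) l * qFac q l * qFac q (b + c) = qFac q (b + l + c) :=
    qBinom_mul_qFac q _ _ _ (by omega)
  have k2 : qBinom q (t + l + c) (l + t) * qFac q (l + t) * qFac q c = qFac q (t + l + c) :=
    qBinom_mul_qFac q _ _ _ (by omega)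
  have k3 : qBinom q (t + b) t * qFac q t * qFac q b = qFac q (t + b) :=
    qBinom_mul_qFac q _ _ _ (by omega)
  have k4 : qBinom q (l + c) l * qFac q l * qFac q c = qFac q (l + c) :=
    qBinom_mul_qFac q _ _ _ (by omega)
  -- root-of-unity reflections
  have i1 : q ^ (t * b + b * (b + 1) / 2) * qFac q (b + l + c) * qFac q t =
      (-1) ^ b * qFac q (t + b) * qFac q (l + c) :=
    Lpp hq b t (l + c) (b + l + c) (t + b) (by omega) (by omega) (by omega)
  have i2 : q ^ (b * (l + t) + (l + t) * ((l + t) + 1) / 2) * qFac q (t + l + c) * qFac q b =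
      (-1) ^ (l + t) * qFac q (t + b + l) * qFac q c :=
    Lpp hq (l + t) b c (t + l + c) (t + b + l) (by omega) (by omega) (by omega)
  have i3 : q ^ ((l + t) * b + b * (b + 1) / 2) * qFac q (b + c) * qFac q (l + t) =
      (-1) ^ b * qFac q (t + b + l) * qFac q c :=
    Lpp hq b (l + t) c (b + c) (t + b + l) (by omega) (by omega) (by omega)
  have hs1 : ((-1 : k)) ^ (l + t) * (-1) ^ (l + t) = 1 := by
    rw [← pow_add, ← two_mul, pow_mul]
    norm_num
  apply mul_left_cancel₀ (a := q ^ (t * b + b * (b + 1) / 2 + (b * (l + t) + (l + t) * ((l + t) + 1) / 2)) *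
      (qFac q l * qFac q (b + c) * qFac q (l + t) * qFac q c * qFac q t * qFac q b *
        qFac q l * qFac q c))
  · exact mul_ne_zero (pow_ne_zero _ hq0) (by
      repeat' apply mul_ne_zero
      all_goals assumption)
  calc q ^ (t * b + b * (b + 1) / 2 + (b * (l + t) + (l + t) * ((l + t) + 1) / 2)) *
        (qFac q l * qFac q (b + c) * qFac q (l + t) * qFac q c * qFac q t * qFac q b *
          qFac q l * qFac q c) *
        (q ^ ((l + t) * (l + t + 1) / 2 + t * b) * (-1) ^ (l + t) *
          qBinom q (b + l + c) l * qBinom q (t + l + c) (l + t))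
      = (qBinom q (b + l + c) l * qFac q l * qFac q (b + c)) *
          (qBinom q (t + l + c) (l + t) * qFac q (l + t) * qFac q c) *
          (q ^ (t * b + b * (b + 1) / 2 + (b * (l + t) + (l + t) * ((l + t) + 1) / 2)) *
            q ^ ((l + t) * (l + t + 1) / 2 + t * b) * (-1) ^ (l + t) *
            qFac q t * qFac q b * qFac q l * qFac q c) := by ring
    _ = qFac q (b + l + c) * qFac q (t + l + c) *
          (q ^ (t * b + b * (b + 1) / 2 + (b * (l + t) + (l + t) * ((l + t) + 1) / 2)) *
            q ^ ((l + t) * (l + t + 1) / 2 + t * b) * (-1) ^ (l + t) *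
            qFac q t * qFac q b * qFac q l * qFac q c) := by rw [k1, k2]
    _ = (q ^ (t * b + b * (b + 1) / 2) * qFac q (b + l + c) * qFac q t) *
          (q ^ (b * (l + t) + (l + t) * ((l + t) + 1) / 2) * qFac q (t + l + c) * qFac q b) *
          (q ^ ((l + t) * (l + t + 1) / 2 + t * b) * (-1) ^ (l + t) * qFac q l * qFac q c) := by
        ring
    _ = ((-1) ^ b * qFac q (t + b) * qFac q (l + c)) *
          ((-1) ^ (l + t) * qFac q (t + b + l) * qFac q c) *
          (q ^ ((l + t) * (l + t + 1) / 2 + t * b) * (-1) ^ (l + t) * qFac q l * qFac q c) := by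
        rw [i1, i2]
    _ = ((-1 : k) ^ (l + t) * (-1) ^ (l + t)) *
          ((-1) ^ b * qFac q (t + b) * qFac q (l + c) * qFac q (t + b + l) * qFac q c *
            q ^ ((l + t) * (l + t + 1) / 2 + t * b) * qFac q l * qFac q c) := by ring
    _ = (-1) ^ b * qFac q (t + b) * qFac q (l + c) * qFac q (t + b + l) * qFac q c *
          q ^ ((l + t) * (l + t + 1) / 2 + t * b) * qFac q l * qFac q c := by
        rw [hs1, one_mul]
    _ = qFac q (t + b) * qFac q (l + c) * q ^ ((l + t) * (l + t + 1) / 2 + t * b) *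
          ((-1) ^ b * qFac q (t + b + l) * qFac q c) * (qFac q l * qFac q c) := by ring
    _ = qFac q (t + b) * qFac q (l + c) * q ^ ((l + t) * (l + t + 1) / 2 + t * b) *
          (q ^ ((l + t) * b + b * (b + 1) / 2) * qFac q (b + c) * qFac q (l + t)) *
          (qFac q l * qFac q c) := by rw [i3]
    _ = q ^ (t * b + b * (b + 1) / 2 + (b * (l + t) + (l + t) * ((l + t) + 1) / 2)) *
          (qFac q l * qFac q (b + c) * qFac q (l + t) * qFac q c * qFac q t * qFac q b *
            qFac q l * qFac q c) *
          (qBinom q (t + b) t * qBinom q (l + c) l) := by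
        rw [← k3, ← k4]; ring
end

section
/- Let D' be the finite-dimensional algebra generated by x, g, u_0, …, u_{m-1} subject to x^{md} = g^m = 1, u_j u_0 = 0 for 1 ≤ j ≤ m-1, u_i = γ^i x^d u_i, x u_i = u_i x^{-1}, u_i g = γ^i x^{-2d} g u_i, and u_0^2 = (1/m) x^{-(1+m)d/2} φ_0 ⋯ φ_{m-2} g, where φ_i = 1 - γ^{-i-1} x^d. Then the element Λ := ∑_{i=0}^{md-1} ∑_{j=0}^{m-1} x^i g^j + ∑_{i=0}^{md-1} ∑_{j=0}^{m-1} x^i g^j u_0 satisfies h Λ = ε(h) Λ for all generators h ∈ {x, g, u_0, …, u_{m-1}}, where ε(x) = ε(g) = ε(u_0) = 1 and ε(u_s) = 0 for 1 ≤ s ≤ m-1; moreover ε(Λ) = 2 m² d ≠ 0. -/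
/-!
Write `E = ∑_{i<md} xⁱ` and `T = ∑_{j<m} gʲ`, so that `Λ = E T (1 + u₀)`. Since `x^{md} = 1` and
`g^m = 1`, `E` absorbs `x^{±1}` on both sides and `T` absorbs `g`; `E` commutes with `u₀` because
conjugation by `u₀` inverts `x`. The relations do not say that `g` commutes with `x`: this comes
from the square relation. Indeed `u₀²` commutes with `g`, and `u₀² g⁻¹`, a polynomial in `x^{±1}`,
acts on `E` as the scalar `(1/m) ∏_{i<m-1} (1 - γ^{-i-1}) = 1`, whence `E g = E u₀² = u₀² E = g E`.
This gives `g Λ = Λ` and `u₀ Λ = Λ`. For `1 ≤ s < m`, `u_s = γ^s x^d u_s` and `x^d u_s = u_s x^{-d}`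
give `u_s Λ = γ^s u_s Λ`, so `u_s Λ = 0`.
-/

open Finset

section Monoid
variable {M : Type*} [Monoid M]

theorem pow_mul_eq_self_of_mul_eq_self {a b : M} (h : a * b = b) : ∀ n : ℕ, a ^ n * b = b
  | 0 => by rw [pow_zero, one_mul]
  | n + 1 => by rw [pow_succ', mul_assoc, pow_mul_eq_self_of_mul_eq_self h n, h]

theorem mul_pow_eq_self_of_mul_eq_self {a b : M} (h : b * a = b) : ∀ n : ℕ, b * a ^ n = b
  | 0 => by rw [pow_zero, mul_one]
  | n + 1 => by rw [pow_succ, ← mul_assoc, mul_pow_eq_self_of_mul_eq_self h n, h]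

theorem commute_mul_self_of_mul_eq {u g x y : M} (hug : u * g = y * g * u)
    (hxu : x * u = u * y) (hxy : x * y = 1) : Commute (u * u) g :=
  calc u * u * g = u * y * g * u := by rw [mul_assoc, hug]; simp only [mul_assoc]
    _ = x * (u * g) * u := by rw [← hxu]; simp only [mul_assoc]
    _ = g * (u * u) := by rw [hug]; simp only [← mul_assoc]; rw [hxy, one_mul]

end Monoid

section Ring
variable {R : Type*} [Ring R]

theorem mul_geom_sum_of_pow_eq_one {x : R} {n : ℕ} (h : x ^ n = 1) :
    x * ∑ i ∈ range n, x ^ i = ∑ i ∈ range n, x ^ i := by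
  have := mul_geom_sum x n
  rwa [h, sub_self, sub_mul, one_mul, sub_eq_zero] at this

theorem geom_sum_mul_of_pow_eq_one {x : R} {n : ℕ} (h : x ^ n = 1) :
    (∑ i ∈ range n, x ^ i) * x = ∑ i ∈ range n, x ^ i := by
  have := geom_sum_mul x n
  rwa [h, sub_self, mul_sub, mul_one, sub_eq_zero] at this

theorem geom_sum_eq_of_mul_eq_one {x y : R} {n : ℕ} (hyx : y * x = 1) (hx : x ^ n = 1) :
    ∑ i ∈ range n, y ^ i = ∑ i ∈ range n, x ^ i := by
  have hy : y ^ n = 1 :=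
    calc y ^ n = y ^ n * x ^ n := by rw [hx, mul_one]
      _ = 1 := pow_mul_pow_eq_one n hyx
  have hterm : ∀ i ∈ range n, y ^ (i + 1) = x ^ (n - 1 - i) := fun i hi => by
    have hn : i + 1 + (n - 1 - i) = n := by have := mem_range.1 hi; omega
    calc y ^ (i + 1) = y ^ (i + 1) * x ^ (i + 1 + (n - 1 - i)) := by rw [hn, hx, mul_one]
      _ = x ^ (n - 1 - i) := by rw [pow_add x, ← mul_assoc, pow_mul_pow_eq_one _ hyx, one_mul]
  calc ∑ i ∈ range n, y ^ i = ∑ i ∈ range n, y ^ (i + 1) := by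
        simp_rw [pow_succ']; rw [← mul_sum, mul_geom_sum_of_pow_eq_one hy]
    _ = ∑ i ∈ range n, x ^ (n - 1 - i) := sum_congr rfl hterm
    _ = ∑ i ∈ range n, x ^ i := sum_range_reflect (x ^ ·) n

theorem commute_geom_sum_of_mul_eq {x y u : R} {n : ℕ} (hxu : x * u = u * y) (hyx : y * x = 1)
    (hx : x ^ n = 1) : Commute (∑ i ∈ range n, x ^ i) u :=
  calc (∑ i ∈ range n, x ^ i) * u = ∑ i ∈ range n, u * y ^ i := by
        rw [sum_mul]; exact sum_congr rfl fun i _ => (SemiconjBy.pow_right hxu.symm i).eq.symm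
    _ = u * ∑ i ∈ range n, x ^ i := by rw [← mul_sum, geom_sum_eq_of_mul_eq_one hyx hx]

theorem commute_of_mul_self_eq_mul {u g z e : R} (hg : IsUnit g) (hu : u * u = z * g)
    (hug : Commute (u * u) g) (heu : Commute e u) (hze : z * e = e) (hez : e * z = e) :
    Commute e g := by
  have hzg : z * g = g * z := by
    have h := hug.eq
    rw [hu, ← mul_assoc] at h
    exact hg.mul_left_inj.1 h
  calc e * g = e * (u * u) := by rw [hu, ← mul_assoc, hez]
    _ = u * u * e := (heu.mul_right heu).eq
    _ = g * e := by rw [hu, hzg, mul_assoc, hze]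

theorem commute_mul_geom_sum {e g u y : R} (n : ℕ) (heg : Commute e g) (heu : Commute e u)
    (hug : u * g = y * g * u) (hey : e * y = e) :
    Commute (e * ∑ j ∈ range n, g ^ j) u := by
  have hcomm : Commute (e * u) g := by
    show e * u * g = g * (e * u)
    rw [mul_assoc, hug, ← mul_assoc, ← mul_assoc, hey, heg.eq, mul_assoc]
  have hT : Commute (e * u) (∑ j ∈ range n, g ^ j) :=
    Commute.sum_right _ _ _ fun j _ => hcomm.pow_right j
  have heT : Commute e (∑ j ∈ range n, g ^ j) :=
    Commute.sum_right _ _ _ fun j _ => heg.pow_right j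
  calc e * (∑ j ∈ range n, g ^ j) * u = (∑ j ∈ range n, g ^ j) * (e * u) := by
        rw [heT.eq, mul_assoc]
    _ = u * (e * ∑ j ∈ range n, g ^ j) := by rw [← hT.eq, heu.eq, mul_assoc]

theorem mul_mul_one_add_of_commute {e u : R} (h : Commute e u) (hsq : e * (u * u) = e) :
    u * (e * (1 + u)) = e * (1 + u) := by
  rw [← mul_assoc, ← h.eq, mul_assoc, mul_one_add, mul_add, hsq, add_comm, mul_one_add]

theorem mul_mul_geom_sum_mul_one_add {e g u y : R} {n : ℕ} (hg : g ^ n = 1)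
    (heg : Commute e g) (heu : Commute e u) (hug : u * g = y * g * u) (hey : e * y = e)
    (huug : Commute (u * u) g) (heuu : e * (u * u) = e * g) :
    u * (e * (∑ j ∈ range n, g ^ j) * (1 + u)) = e * (∑ j ∈ range n, g ^ j) * (1 + u) := by
  refine mul_mul_one_add_of_commute (commute_mul_geom_sum n heg heu hug hey) ?_
  rw [mul_assoc, (Commute.sum_left _ _ _ fun j _ => huug.symm.pow_left j).eq, ← mul_assoc, heuu,
    mul_assoc, mul_geom_sum_of_pow_eq_one hg]

end Ring

theorem List.prod_map_mul_eq_smul {k A ι : Type*} [CommSemiring k] [Semiring A] [Algebra k A]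
    {e : A} {a : ι → A} {r : ι → k} (h : ∀ i, a i * e = r i • e) :
    ∀ l : List ι, (l.map a).prod * e = (l.map r).prod • e
  | [] => by simp
  | i :: l => by
    rw [List.map_cons, List.prod_cons, mul_assoc, List.prod_map_mul_eq_smul h l, mul_smul_comm,
      h, smul_smul, List.map_cons, List.prod_cons, mul_comm (r i)]

theorem List.mul_prod_map_eq_smul {k A ι : Type*} [CommSemiring k] [Semiring A] [Algebra k A]
    {e : A} {a : ι → A} {r : ι → k} (h : ∀ i, e * a i = r i • e) :
    ∀ l : List ι, e * (l.map a).prod = (l.map r).prod • e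
  | [] => by simp
  | i :: l => by
    rw [List.map_cons, List.prod_cons, ← mul_assoc, h, smul_mul_assoc,
      List.mul_prod_map_eq_smul h l, smul_smul, List.map_cons, List.prod_cons]

section RootOfUnity
variable {k A : Type*} [Field k] [Ring A] [Algebra k A] {γ : k} {m : ℕ}

theorem IsPrimitiveRoot.prod_one_sub_zpow_neg_sub_one (hγ : IsPrimitiveRoot γ m) (hm : 0 < m) :
    ((List.range (m - 1)).map (fun i => 1 - γ ^ (-(i : ℤ) - 1))).prod = m := by
  obtain ⟨n, rfl⟩ : ∃ n, m = n + 1 := ⟨m - 1, by omega⟩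
  rw [Nat.add_sub_cancel, Nat.cast_succ, ← hγ.inv.prod_one_sub_pow_eq_order]
  -- `List.range n` enters the statement as a list of integers, through the list monad.
  simp only [List.bind_eq_flatMap, List.pure_def, ← List.map_eq_flatMap, List.map_map]
  refine congrArg List.prod (List.map_congr_left fun i _ => ?_)
  rw [Function.comp_apply, inv_pow, ← zpow_natCast, ← zpow_neg, Nat.cast_succ, neg_add']

theorem IsPrimitiveRoot.prod_one_sub_mul_mul_eq_smul (hγ : IsPrimitiveRoot γ m) (hm : 0 < m)
    {x e : A} (hxe : x * e = e) :
    ((List.range (m - 1)).map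
      (fun i => 1 - algebraMap k A (γ ^ (-(i : ℤ) - 1)) * x)).prod * e = (m : k) • e := by
  have hφ : ∀ i : ℤ, (1 - algebraMap k A (γ ^ (-i - 1)) * x) * e = (1 - γ ^ (-i - 1)) • e :=
    fun i => by rw [sub_mul, one_mul, mul_assoc, hxe, sub_smul, one_smul, Algebra.smul_def]
  rw [List.prod_map_mul_eq_smul hφ, hγ.prod_one_sub_zpow_neg_sub_one hm]

theorem IsPrimitiveRoot.mul_prod_one_sub_mul_eq_smul (hγ : IsPrimitiveRoot γ m) (hm : 0 < m)
    {x e : A} (hex : e * x = e) :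
    e * ((List.range (m - 1)).map
      (fun i => 1 - algebraMap k A (γ ^ (-(i : ℤ) - 1)) * x)).prod = (m : k) • e := by
  have hφ : ∀ i : ℤ, e * (1 - algebraMap k A (γ ^ (-i - 1)) * x) = (1 - γ ^ (-i - 1)) • e :=
    fun i => by
      rw [mul_sub, mul_one, ← mul_assoc, ← Algebra.commutes, mul_assoc, hex, sub_smul, one_smul,
        Algebra.smul_def]
  rw [List.mul_prod_map_eq_smul hφ, hγ.prod_one_sub_zpow_neg_sub_one hm]

theorem IsPrimitiveRoot.commute_and_mul_mul_self_eq (hγ : IsPrimitiveRoot γ m) (hm : 0 < m)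
    {x y g u e : A} (hxe : x * e = e) (hex : e * x = e) (hye : y * e = e) (hey : e * y = e)
    (hg : IsUnit g) (huug : Commute (u * u) g) (heu : Commute e u)
    (hu : u * u = algebraMap k A (1 / m) * y *
      ((List.range (m - 1)).map
        (fun i => 1 - algebraMap k A (γ ^ (-(i : ℤ) - 1)) * x)).prod * g) :
    Commute e g ∧ e * (u * u) = e * g := by
  have hm0 : (m : k) ≠ 0 := by
    have : NeZero m := ⟨hm.ne'⟩
    exact hγ.neZero'.out
  have hze : algebraMap k A (1 / m) * y * ((List.range (m - 1)).map
      (fun i => 1 - algebraMap k A (γ ^ (-(i : ℤ) - 1)) * x)).prod * e = e := by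
    rw [mul_assoc, hγ.prod_one_sub_mul_mul_eq_smul hm hxe, mul_smul_comm, mul_assoc, hye,
      ← Algebra.smul_def, smul_smul, one_div, mul_inv_cancel₀ hm0, one_smul]
  have hez : e * (algebraMap k A (1 / m) * y * ((List.range (m - 1)).map
      (fun i => 1 - algebraMap k A (γ ^ (-(i : ℤ) - 1)) * x)).prod) = e := by
    rw [mul_assoc, ← Algebra.smul_def, mul_smul_comm, ← mul_assoc, hey,
      hγ.mul_prod_one_sub_mul_eq_smul hm hex, smul_smul, one_div, inv_mul_cancel₀ hm0, one_smul]
  exact ⟨commute_of_mul_self_eq_mul hg hu huug heu hze hez, by rw [hu, ← mul_assoc, hez]⟩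

end RootOfUnity

theorem mul_eq_zero_of_eq_algebraMap_mul {k A : Type*} [Field k] [Ring A] [Algebra k A]
    {u x y v : A} {c : k} (hc : c ≠ 1) (hu : u = algebraMap k A c * x * u)
    (hxu : x * u = u * y) (hyv : y * v = v) : u * v = 0 := by
  have h : c • (u * v) = u * v :=
    calc c • (u * v) = c • (u * (y * v)) := by rw [hyv]
      _ = algebraMap k A c * x * u * v := by
          rw [Algebra.smul_def, ← mul_assoc u, ← hxu]; simp only [mul_assoc]
      _ = u * v := by rw [← hu]
  have h' : (c - 1) • (u * v) = 0 := by rw [sub_smul, h, one_smul, sub_self]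
  exact (smul_eq_zero.1 h').resolve_left (sub_ne_zero.2 hc)

theorem stmt_12_general {k : Type*} [Field k] [CharZero k]
    {A : Type*} [Ring A] [Algebra k A]
    (m d : ℕ) (hm : 0 < m) (hd : 0 < d)
    (ξ : k) (hξ : IsPrimitiveRoot ξ (2 * m)) (γ : k) (hγ : γ = ξ ^ 2)
    (X Xi G : A) (U : ℕ → A)
    -- relations of D' = D(m,d,ξ)/(y):
    (hXXi : X * Xi = 1) (hXiX : Xi * X = 1)
    (hXord : X ^ (m * d) = 1) (hGord : G ^ m = 1)
    (hu : ∀ i, U i = algebraMap k A (γ ^ i) * X ^ d * U i)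
    (hXu : ∀ i, X * U i = U i * Xi)
    (huG : ∀ i, U i * G = algebraMap k A (γ ^ i) * Xi ^ (2 * d) * G * U i)
    (hu0sq : U 0 * U 0 =
      algebraMap k A ((1 : k) / m) * Xi ^ ((1 + m) * d / 2) *
        ((List.range (m - 1)).map
          (fun i => 1 - algebraMap k A (γ ^ (-(i : ℤ) - 1)) * X ^ d)).prod * G)
    -- the counit ε on generators:
    (ε : A →ₐ[k] k) (hεX : ε X = 1) (hεG : ε G = 1) (hεU0 : ε (U 0) = 1)
    (hεU : ∀ s, 1 ≤ s → s ≤ m - 1 → ε (U s) = 0) :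
    -- conclusion: Λ is a nonzero left integral with ε(Λ) = 2m²d
    let Λ : A :=
      (∑ i ∈ Finset.range (m * d), ∑ j ∈ Finset.range m, X ^ i * G ^ j) +
      (∑ i ∈ Finset.range (m * d), ∑ j ∈ Finset.range m, X ^ i * G ^ j * U 0)
    (X * Λ = ε X • Λ) ∧ (G * Λ = ε G • Λ) ∧
    (∀ s, s ≤ m - 1 → U s * Λ = ε (U s) • Λ) ∧
    ε Λ = 2 * m ^ 2 * d ∧ ε Λ ≠ 0 := by
  intro Λ
  have hγm : IsPrimitiveRoot γ m := hγ ▸ hξ.pow (by omega) rfl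
  have hΛ : Λ = (∑ i ∈ range (m * d), X ^ i) * (∑ j ∈ range m, G ^ j) * (1 + U 0) := by
    simp_rw [mul_one_add, sum_mul_sum, sum_mul]
    rfl
  set E := ∑ i ∈ range (m * d), X ^ i
  have hXE : X * E = E := mul_geom_sum_of_pow_eq_one hXord
  have hEX : E * X = E := geom_sum_mul_of_pow_eq_one hXord
  have hXiE : Xi * E = E := by nth_rw 1 [← hXE]; rw [← mul_assoc, hXiX, one_mul]
  have hEXi : E * Xi = E := by nth_rw 1 [← hEX]; rw [mul_assoc, hXXi, mul_one]
  have hXpowU : ∀ s a, X ^ a * U s = U s * Xi ^ a := fun s a =>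
    (SemiconjBy.pow_right (hXu s).symm a).eq.symm
  have hU0G : U 0 * G = Xi ^ (2 * d) * G * U 0 := by simpa using huG 0
  have hEU : Commute E (U 0) := commute_geom_sum_of_mul_eq (hXu 0) hXiX hXord
  have hUUG : Commute (U 0 * U 0) G :=
    commute_mul_self_of_mul_eq hU0G (hXpowU 0 _) (pow_mul_pow_eq_one _ hXXi)
  obtain ⟨hEG, hEUU⟩ := hγm.commute_and_mul_mul_self_eq hm
    (pow_mul_eq_self_of_mul_eq_self hXE d) (mul_pow_eq_self_of_mul_eq_self hEX d)
    (pow_mul_eq_self_of_mul_eq_self hXiE _) (mul_pow_eq_self_of_mul_eq_self hEXi _)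
    (IsUnit.of_pow_eq_one hGord hm.ne') hUUG hEU hu0sq
  have hεΛ : ε Λ = 2 * m ^ 2 * d := by
    rw [hΛ]
    simp only [E, map_mul, map_add, map_sum, map_pow, map_one, hεX, hεG, hεU0, one_pow, sum_const,
      card_range, nsmul_eq_mul, Nat.cast_mul, mul_one]
    ring
  refine ⟨?_, ?_, ?_, hεΛ, ?_⟩
  · rw [hεX, one_smul, hΛ, ← mul_assoc, ← mul_assoc, hXE]
  · rw [hεG, one_smul, hΛ, ← mul_assoc, ← mul_assoc, ← hEG.eq, mul_assoc E,
      mul_geom_sum_of_pow_eq_one hGord]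
  · intro s hs
    rcases Nat.eq_zero_or_pos s with rfl | hs0
    · rw [hεU0, one_smul, hΛ]
      exact mul_mul_geom_sum_mul_one_add hGord hEG hEU hU0G
        (mul_pow_eq_self_of_mul_eq_self hEXi _) hUUG hEUU
    · rw [hεU s hs0 hs, zero_smul]
      refine mul_eq_zero_of_eq_algebraMap_mul (hγm.pow_ne_one_of_pos_of_lt hs0.ne' (by omega))
        (hu s) (hXpowU s d) ?_
      rw [hΛ, ← mul_assoc, ← mul_assoc, pow_mul_eq_self_of_mul_eq_self hXiE]
  · rw [hεΛ]
    simp [hm.ne', hd.ne']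

/-- in the finite dimensional algebra D' = D(m,d,ξ)/(y), with generators
X (and inverse Xi), G, U 0, …, U (m-1) subject to the listed relations, the element
Λ = ∑_{i<md} ∑_{j<m} X^i G^j + ∑_{i<md} ∑_{j<m} X^i G^j U 0 is a left integral:
h Λ = ε(h) Λ for all generators h, and ε(Λ) = 2m²d ≠ 0. -/
theorem stmt_12 {k : Type*} [Field k] [IsAlgClosed k] [CharZero k]
    {A : Type*} [Ring A] [Algebra k A]
    (m d : ℕ) (hm : 0 < m) (hd : 0 < d) (heven : Even ((1 + m) * d))
    (ξ : k) (hξ : IsPrimitiveRoot ξ (2 * m)) (γ : k) (hγ : γ = ξ ^ 2)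
    (X Xi G : A) (U : ℕ → A) (hUper : ∀ s, U (s + m) = U s)
    -- relations of D' = D(m,d,ξ)/(y):
    (hXXi : X * Xi = 1) (hXiX : Xi * X = 1)
    (hXord : X ^ (m * d) = 1) (hGord : G ^ m = 1)
    (huu0 : ∀ s, 1 ≤ s → s ≤ m - 1 → U s * U 0 = 0)
    (hu : ∀ i, U i = algebraMap k A (γ ^ i) * X ^ d * U i)
    (hXu : ∀ i, X * U i = U i * Xi)
    (huG : ∀ i, U i * G = algebraMap k A (γ ^ i) * Xi ^ (2 * d) * G * U i)
    (hu0sq : U 0 * U 0 =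
      algebraMap k A ((1 : k) / m) * Xi ^ ((1 + m) * d / 2) *
        ((List.range (m - 1)).map
          (fun i => 1 - algebraMap k A (γ ^ (-(i : ℤ) - 1)) * X ^ d)).prod * G)
    -- the counit ε on generators:
    (ε : A →ₐ[k] k) (hεX : ε X = 1) (hεG : ε G = 1) (hεU0 : ε (U 0) = 1)
    (hεU : ∀ s, 1 ≤ s → s ≤ m - 1 → ε (U s) = 0) :
    -- conclusion: Λ is a nonzero left integral with ε(Λ) = 2m²d
    let Λ : A :=
      (∑ i ∈ Finset.range (m * d), ∑ j ∈ Finset.range m, X ^ i * G ^ j) +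
      (∑ i ∈ Finset.range (m * d), ∑ j ∈ Finset.range m, X ^ i * G ^ j * U 0)
    (X * Λ = ε X • Λ) ∧ (G * Λ = ε G • Λ) ∧
    (∀ s, s ≤ m - 1 → U s * Λ = ε (U s) • Λ) ∧
    ε Λ = 2 * m ^ 2 * d ∧ ε Λ ≠ 0 :=
  stmt_12_general m d hm hd ξ hξ γ hγ X Xi G U hXXi hXiX hXord hGord hu hXu huG hu0sq ε hεX hεG hεU0
    hεU
end
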